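/- For all integers n, r, m with r ≥ 1 and 1 ≤ m ≤ n - r, there exist matrices A_1,…,A_m ∈ ℝ^{n×n} (not necessarily invertible) and B_1,…,B_m ∈ ℝ^{n×r} each of rank r such that the associated switched linear control system is controllable, there exists a controllable switching sequence of length m(2n - m - 2r + 1)/2 + 1, and no controllable switching sequence has length strictly smaller than m(2n - m - 2r + 1)/2 + 1. -/

import Mathlib

/-- Reachable space of a discrete-time switched linear control system
`x_k = A_{i_k} x_{k-1} + B_{i_k} u_k` along the switching sequence `π`
(the head of the list is the first applied mode):
`R(ε) = {0}` and `R(π' i) = A_i R(π') + Im(B_i)`. -/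
def reach {n m : ℕ} (A : Fin m → Matrix (Fin n) (Fin n) ℝ) {q : Fin m → ℕ}
    (B : ∀ i, Matrix (Fin n) (Fin (q i)) ℝ) (π : List (Fin m)) :
    Submodule ℝ (Fin n → ℝ) :=
  π.foldl (fun S i =>
    Submodule.map (Matrix.mulVecLin (A i)) S ⊔ LinearMap.range (Matrix.mulVecLin (B i))) ⊥

/-- The subspaces `V_k`: `V_0 = {0}`, `V_1 = Σ_i Im B_i`, and
`V_{k+1} = V_k + Σ_i A_i V_k` for `k ≥ 1`. -/
def Vsp {n m : ℕ} (A : Fin m → Matrix (Fin n) (Fin n) ℝ) {q : Fin m → ℕ}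
    (B : ∀ i, Matrix (Fin n) (Fin (q i)) ℝ) : ℕ → Submodule ℝ (Fin n → ℝ)
  | 0 => ⊥
  | 1 => ⨆ i, LinearMap.range (Matrix.mulVecLin (B i))
  | (k + 2) => Vsp A B (k + 1) ⊔
      ⨆ i, Submodule.map (Matrix.mulVecLin (A i)) (Vsp A B (k + 1))

/-!
The system is monomial: each `A_i` sends basis vectors to basis vectors and every `B_i` spans the
first `r = k + 1` coordinates, so all reachable spaces are coordinate subspaces and the question
becomes a token game. With `n = k + 1 + N`, coordinate `k + t` is cell `t ∈ {0, …, N}`, and the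
coordinates below `k` also lie in cell `0`, which every step refills. Mode `i < m - 1` moves the
token of cell `i` to cell `i + 1`, keeps the tokens above cell `i + 1` and discards the others;
mode `m - 1` shifts every token in a cell `≥ m - 1` up by one.

The weight `∑ min t m` of the occupied cells grows by at most one per step (only the token leaving
cell `i` can gain), it vanishes after the first step, and for all cells occupied it equals
`mN - m(m - 1)/2`: this is the lower bound. Sweeping `0, 1, …, m - 1` repeatedly and then running
the prefixes `0, …, j - 1` for `j = m - 1, …, 1` fills every cell in exactly that many steps.
-/

open Finset Matrix

namespace Matrix

variable {R ι κ : Type*} [CommSemiring R] [DecidableEq κ]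

theorem col_one_submatrix (f : ι → κ) :
    ((1 : Matrix κ κ R).submatrix id f).col = fun b => Pi.single (f b) 1 := by
  ext b a
  simp [Matrix.one_apply, Pi.single_apply]

theorem one_submatrix_mulVec_single [Fintype ι] [DecidableEq ι] (f : ι → κ) (b : ι) :
    (1 : Matrix κ κ R).submatrix id f *ᵥ Pi.single b 1 = Pi.single (f b) 1 := by
  rw [mulVec_single, col_one_submatrix, MulOpposite.op_one, one_smul]

theorem range_mulVecLin_one_submatrix [Fintype ι] (f : ι → κ) :
    LinearMap.range ((1 : Matrix κ κ R).submatrix id f).mulVecLin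
      = Submodule.span R (Set.range fun b => Pi.single (f b) 1) := by
  rw [range_mulVecLin, col_one_submatrix]

theorem rank_one_submatrix [Fintype ι] [Fintype κ] [Nontrivial R] [StrongRankCondition R]
    {f : ι → κ} (hf : f.Injective) :
    ((1 : Matrix κ κ R).submatrix id f).rank = Fintype.card ι := by
  rw [rank_eq_finrank_span_cols, col_one_submatrix]
  have hli : LinearIndependent R (Pi.basisFun R κ ∘ f) :=
    (Pi.basisFun R κ).linearIndependent.comp f hf
  simp only [Function.comp_def, Pi.basisFun_apply] at hli
  exact finrank_span_eq_card hli

end Matrix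

theorem span_single_image_eq_top_iff {R ι : Type*} [Semiring R] [Nontrivial R] [Fintype ι]
    [DecidableEq ι] (S : Finset ι) :
    Submodule.span R ((fun j => Pi.single j (1 : R)) '' (S : Set ι)) = ⊤ ↔ S = univ := by
  have he : (fun j => Pi.single j (1 : R)) = Pi.basisFun R ι := by
    ext j; rw [Pi.basisFun_apply]
  rw [he]
  constructor
  · intro h
    refine eq_univ_of_forall fun j => ?_
    have hj := (Pi.basisFun R ι).mem_span_image.1
      (h ▸ Submodule.mem_top (x := Pi.basisFun R ι j))
    rw [Module.Basis.repr_self, Finsupp.support_single _ one_ne_zero] at hj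
    simpa using hj
  · rintro rfl
    rw [coe_univ, Set.image_univ, Module.Basis.span_eq]

def reachIndices {n m : ℕ} (g : Fin m → Fin n → Fin n) (S₀ : Fin m → Finset (Fin n))
    (π : List (Fin m)) : Finset (Fin n) :=
  π.foldl (fun S i => S.image (g i) ∪ S₀ i) ∅

theorem reach_eq_span_reachIndices {n m : ℕ} {A : Fin m → Matrix (Fin n) (Fin n) ℝ}
    {q : Fin m → ℕ} {B : ∀ i, Matrix (Fin n) (Fin (q i)) ℝ} {g : Fin m → Fin n → Fin n}
    {S₀ : Fin m → Finset (Fin n)} (hA : ∀ i b, A i *ᵥ Pi.single b 1 = Pi.single (g i b) 1)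
    (hB : ∀ i, LinearMap.range (B i).mulVecLin
      = Submodule.span ℝ ((fun j => Pi.single j 1) '' (S₀ i : Set (Fin n))))
    (π : List (Fin m)) :
    reach A B π
      = Submodule.span ℝ
          ((fun j => Pi.single j 1) '' (reachIndices g S₀ π : Set (Fin n))) := by
  let spanOf : Finset (Fin n) → Submodule ℝ (Fin n → ℝ) := fun S =>
    Submodule.span ℝ ((fun j => Pi.single j 1) '' (S : Set (Fin n)))
  have hbot : (⊥ : Submodule ℝ (Fin n → ℝ)) = spanOf ∅ := by simp [spanOf]
  rw [reach, reachIndices, hbot]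
  refine List.foldl_hom spanOf (g₁ := fun S i => S.image (g i) ∪ S₀ i) fun S i => ?_
  simp only [spanOf, Submodule.map_span, hB, ← Submodule.span_union, coe_union, coe_image,
    Set.image_union, Set.image_image, Matrix.mulVecLin_apply, hA]

theorem subset_reachIndices {n m : ℕ} (g : Fin m → Fin n → Fin n)
    (S₀ : Fin m → Finset (Fin n)) {π : List (Fin m)} (hπ : π ≠ []) :
    S₀ (π.getLast hπ) ⊆ reachIndices g S₀ π := by
  conv_rhs => rw [← List.dropLast_append_getLast hπ]
  simp [reachIndices]

section Cells

variable {m N : ℕ}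

def cellMove (m N i t : ℕ) : ℕ :=
  if i + 1 = m then (if i ≤ t then min (t + 1) N else 0)
  else if t = i then i + 1 else if i + 1 < t then t else 0

def cellStep (m N : ℕ) (X : Finset ℕ) (i : Fin m) : Finset ℕ :=
  insert 0 (X.image (cellMove m N i))

def cellWeight (m : ℕ) (X : Finset ℕ) : ℕ :=
  ∑ t ∈ X, min t m

theorem cellMove_le (hmN : m ≤ N) {i t : ℕ} (hi : i < m) (ht : t ≤ N) :
    cellMove m N i t ≤ N := by
  unfold cellMove; split_ifs <;> omega

theorem min_cellMove_le (m N i t : ℕ) :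
    min (cellMove m N i t) m ≤ min t m + if t = i then 1 else 0 := by
  unfold cellMove; split_ifs <;> omega

theorem cellWeight_cellStep_le (X : Finset ℕ) (i : Fin m) :
    cellWeight m (cellStep m N X i) ≤ cellWeight m X + 1 :=
  calc cellWeight m (cellStep m N X i)
      = ∑ t ∈ X.image (cellMove m N i), min t m := sum_insert_zero (by simp)
    _ ≤ ∑ t ∈ X, min (cellMove m N i t) m := sum_image_le_of_nonneg fun _ _ => Nat.zero_le _
    _ ≤ ∑ t ∈ X, (min t m + if t = i then 1 else 0) :=
      sum_le_sum fun t _ => min_cellMove_le ..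
    _ = cellWeight m X + if (i : ℕ) ∈ X then 1 else 0 := by
      rw [sum_add_distrib, sum_ite_eq']; rfl
    _ ≤ cellWeight m X + 1 := by split_ifs <;> omega

theorem cellWeight_foldl_cellStep_le (π : List (Fin m)) (X : Finset ℕ) :
    cellWeight m (π.foldl (cellStep m N) X) ≤ cellWeight m X + π.length := by
  induction π generalizing X with
  | nil => simp
  | cons i π ih =>
    rw [List.foldl_cons, List.length_cons]
    have hstep := cellWeight_cellStep_le (N := N) X i
    have hrest := ih (cellStep m N X i)
    omega

theorem two_mul_cellWeight_range (hmN : m ≤ N) :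
    2 * cellWeight m (range (N + 1)) = m * (2 * N - m + 1) := by
  induction N, hmN using Nat.le_induction with
  | base =>
    have hsum : cellWeight m (range (m + 1)) = ∑ t ∈ range (m + 1), t :=
      sum_congr rfl fun t ht => min_eq_left (Nat.lt_succ_iff.1 (mem_range.1 ht))
    have hgauss := sum_range_id_mul_two (m + 1)
    rw [Nat.add_sub_cancel] at hgauss
    rw [hsum, show 2 * m - m + 1 = m + 1 by omega]
    linarith
  | succ N hmN ih =>
    rw [cellWeight, sum_range_succ, ← cellWeight, min_eq_right (by omega), mul_add, ih,
      show 2 * (N + 1) - m + 1 = (2 * N - m + 1) + 2 by omega]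
    ring

end Cells

section ControlWord

variable {m N : ℕ}

theorem take_finRange_add_one {j : ℕ} (hj : j < m) :
    (List.finRange m).take (j + 1) = (List.finRange m).take j ++ [⟨j, hj⟩] := by
  rw [List.take_add_one, List.getElem?_eq_getElem (by simpa using hj)]
  simp

theorem foldl_cellStep_take {j : ℕ} (hj : j < m) {X : Finset ℕ} (hX : ∀ t ∈ X, j < t) :
    ((List.finRange m).take j).foldl (cellStep m N) (insert 0 X) = insert 0 (insert j X) := by
  induction j generalizing X with
  | zero => simp
  | succ j ih =>
    rw [take_finRange_add_one (show j < m by omega), List.foldl_append,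
      ih (by omega) fun t ht => by have := hX t ht; omega]
    have hfix : X.image (cellMove m N j) = X := by
      rw [image_congr (g := id) fun t ht => ?_, image_id]
      have := hX t ht
      unfold cellMove; split_ifs <;> simp <;> omega
    have hj' : cellMove m N j j = j + 1 := by unfold cellMove; split_ifs <;> omega
    have h0 : cellMove m N j 0 = 0 ∨ cellMove m N j 0 = j + 1 := by
      unfold cellMove; split_ifs <;> omega
    simp only [List.foldl_cons, List.foldl_nil, cellStep, image_insert, hfix, hj']
    rcases h0 with h0 | h0 <;> rw [h0] <;> simp

theorem foldl_cellStep_finRange (hm : 0 < m) {b : ℕ} (hb : m ≤ b + 1) (hbN : b + 1 ≤ N) :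
    (List.finRange m).foldl (cellStep m N) (insert 0 (Icc m b))
      = insert 0 (Icc m (b + 1)) := by
  obtain ⟨e, rfl⟩ : ∃ e, m = e + 1 := ⟨m - 1, by omega⟩
  conv_lhs => rw [← List.take_length (l := List.finRange (e + 1)), List.length_finRange,
    take_finRange_add_one (Nat.lt_succ_self e), List.foldl_append,
    foldl_cellStep_take (Nat.lt_succ_self e) fun t ht => by simp at ht; omega]
  ext a
  simp only [List.foldl_cons, List.foldl_nil, cellStep, mem_insert, mem_image, mem_Icc]
  constructor
  · rintro (rfl | ⟨t, ht, rfl⟩)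
    · exact Or.inl rfl
    · unfold cellMove; split_ifs <;> omega
  · rintro (rfl | ha)
    · exact Or.inl rfl
    · refine Or.inr ⟨a - 1, by omega, ?_⟩
      unfold cellMove; split_ifs <;> omega

theorem foldl_cellStep_sweeps (hm : 0 < m) {s : ℕ} (hs : m - 1 + s ≤ N) :
    (List.replicate s (List.finRange m)).flatten.foldl (cellStep m N) {0}
      = insert 0 (Icc m (m - 1 + s)) := by
  induction s with
  | zero => rw [Nat.add_zero, Icc_eq_empty (by omega)]; rfl
  | succ s ih =>
    rw [List.replicate_succ', List.flatten_append, List.foldl_append, ih (by omega),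
      List.flatten_singleton, foldl_cellStep_finRange hm (by omega) (by omega)]
    rfl

def ladder (m : ℕ) : ℕ → List (Fin m)
  | 0 => []
  | j + 1 => (List.finRange m).take (j + 1) ++ ladder m j

theorem foldl_cellStep_ladder (hmN : m ≤ N) {j : ℕ} (hj : j < m) :
    (ladder m j).foldl (cellStep m N) (insert 0 (Icc (j + 1) N)) = insert 0 (Icc 1 N) := by
  induction j with
  | zero => rfl
  | succ j ih =>
    rw [ladder, List.foldl_append, foldl_cellStep_take hj fun t ht => by simp at ht; omega,
      insert_Icc_add_one_left_eq_Icc (by omega), ih (by omega)]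

theorem two_mul_length_ladder {j : ℕ} (hj : j ≤ m) : 2 * (ladder m j).length = j * (j + 1) := by
  induction j with
  | zero => rfl
  | succ j ih =>
    rw [ladder, List.length_append, List.length_take, List.length_finRange,
      min_eq_left hj, mul_add, ih (by omega)]
    ring

/-- One step to occupy cell `0`, `N + 1 - m` full sweeps filling cells `m, …, N`, and the ladder
filling cells `m - 1, …, 1`. -/
def controlWord (m N : ℕ) : List (Fin m) :=
  (List.finRange m).take 1 ++ (List.replicate (N + 1 - m) (List.finRange m)).flatten
    ++ ladder m (m - 1)

theorem foldl_cellStep_controlWord (hm : 0 < m) (hmN : m ≤ N) :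
    (controlWord m N).foldl (cellStep m N) ∅ = range (N + 1) := by
  have hfirst : ((List.finRange m).take 1).foldl (cellStep m N) ∅ = {0} := by
    rw [← zero_add 1, take_finRange_add_one hm]
    simp [cellStep]
  have hladder := foldl_cellStep_ladder hmN (j := m - 1) (by omega)
  rw [Nat.sub_add_cancel hm] at hladder
  rw [controlWord, List.foldl_append, List.foldl_append, hfirst,
    foldl_cellStep_sweeps hm (by omega), show m - 1 + (N + 1 - m) = N by omega, hladder]
  ext t
  simp only [mem_insert, mem_Icc, mem_range]
  omega

theorem two_mul_length_controlWord (hm : 0 < m) (hmN : m ≤ N) :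
    2 * (controlWord m N).length = m * (2 * N - m + 1) + 2 := by
  obtain ⟨e, rfl⟩ : ∃ e, m = e + 1 := ⟨m - 1, by omega⟩
  obtain ⟨s, rfl⟩ : ∃ s, N = e + s := ⟨N - e, by omega⟩
  have hl := two_mul_length_ladder (m := e + 1) (j := e) (by omega)
  simp only [controlWord, List.length_append, List.length_take, List.length_finRange,
    List.length_flatten, List.map_replicate, List.sum_replicate, smul_eq_mul,
    Nat.add_sub_cancel] at hl ⊢
  rw [show e + s + 1 - (e + 1) = s by omega, show 2 * (e + s) - (e + 1) + 1 = e + 2 * s by omega,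
    min_eq_left (by omega)]
  nlinarith

end ControlWord

section Coordinates

variable {m k N : ℕ}

def cellOf (k : ℕ) {n : ℕ} (j : Fin n) : ℕ := j - k

/-- The cap at `N` only makes the map total; it is inactive for cell maps preserving
`{0, …, N}`. -/
def liftCellMap (k N : ℕ) (f : ℕ → ℕ) (j : Fin (k + 1 + N)) : Fin (k + 1 + N) :=
  ⟨k + min (f (j - k)) N, by omega⟩

def baseIndices (k N : ℕ) : Finset (Fin (k + 1 + N)) :=
  univ.image (Fin.castAdd N)

theorem image_cellOf_baseIndices : (baseIndices k N).image (cellOf k) = {0} := by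
  refine eq_singleton_iff_unique_mem.2
    ⟨mem_image.2 ⟨0, mem_image.2 ⟨0, mem_univ _, rfl⟩, by simp [cellOf]⟩, ?_⟩
  simp only [baseIndices, image_image, mem_image, mem_univ, true_and]
  rintro _ ⟨j, rfl⟩
  simp only [Function.comp_apply, cellOf, Fin.val_castAdd]
  omega

theorem image_cellOf_univ :
    (univ : Finset (Fin (k + 1 + N))).image (cellOf k) = range (N + 1) := by
  ext t
  simp only [mem_image, mem_univ, true_and, mem_range, cellOf]
  constructor
  · rintro ⟨j, rfl⟩
    omega
  · exact fun ht => ⟨⟨k + t, by omega⟩, by simp⟩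

theorem image_cellOf_step {f : ℕ → ℕ} (hf : ∀ t ≤ N, f t ≤ N)
    (S : Finset (Fin (k + 1 + N))) :
    (S.image (liftCellMap k N f) ∪ baseIndices k N).image (cellOf k)
      = insert 0 ((S.image (cellOf k)).image f) := by
  have hlift : cellOf k ∘ liftCellMap k N f = f ∘ cellOf k := by
    ext j
    have := hf (j - k) (by omega)
    simp only [Function.comp_apply, cellOf, liftCellMap]
    omega
  rw [image_union, image_cellOf_baseIndices, image_image, image_image, hlift, insert_eq,
    union_comm]

theorem eq_univ_of_image_cellOf {S : Finset (Fin (k + 1 + N))} (hbase : baseIndices k N ⊆ S)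
    (hcells : range (N + 1) ⊆ S.image (cellOf k)) : S = univ := by
  refine eq_univ_of_forall fun j => ?_
  by_cases hj : (j : ℕ) ≤ k
  · exact hbase (mem_image.2 ⟨⟨j, by omega⟩, mem_univ _, Fin.ext rfl⟩)
  · obtain ⟨b, hb, hbj⟩ := mem_image.1 (hcells (mem_range.2 (show cellOf k j < N + 1 by
      simp only [cellOf]; omega)))
    rwa [show b = j from Fin.ext (by simp only [cellOf] at hbj; omega)] at hb

def modeIndexMap (m k N : ℕ) (i : Fin m) : Fin (k + 1 + N) → Fin (k + 1 + N) :=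
  liftCellMap k N (cellMove m N i)

theorem image_cellOf_reachIndices (hmN : m ≤ N) (π : List (Fin m)) :
    (reachIndices (modeIndexMap m k N) (fun _ => baseIndices k N) π).image (cellOf k)
      = π.foldl (cellStep m N) ∅ := by
  rw [reachIndices, ← image_empty (cellOf k)]
  refine (List.foldl_hom (image (cellOf k)) fun S i => ?_).symm
  exact (image_cellOf_step (fun t ht => cellMove_le hmN i.2 ht) S).symm

def modeMatrix (m k N : ℕ) (i : Fin m) : Matrix (Fin (k + 1 + N)) (Fin (k + 1 + N)) ℝ :=
  (1 : Matrix (Fin (k + 1 + N)) (Fin (k + 1 + N)) ℝ).submatrix id (modeIndexMap m k N i)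

def baseMatrix (k N : ℕ) : Matrix (Fin (k + 1 + N)) (Fin (k + 1)) ℝ :=
  (1 : Matrix (Fin (k + 1 + N)) (Fin (k + 1 + N)) ℝ).submatrix id (Fin.castAdd N)

theorem rank_baseMatrix : (baseMatrix k N).rank = k + 1 := by
  rw [baseMatrix, Matrix.rank_one_submatrix (Fin.castAdd_injective _ _), Fintype.card_fin]

theorem reach_eq_top_iff (π : List (Fin m)) :
    reach (modeMatrix m k N) (fun _ => baseMatrix k N) π = ⊤
      ↔ reachIndices (modeIndexMap m k N) (fun _ => baseIndices k N) π = univ := by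
  rw [reach_eq_span_reachIndices (A := modeMatrix m k N) (g := modeIndexMap m k N)
    (fun _ _ => Matrix.one_submatrix_mulVec_single _ _) fun _ => ?_, span_single_image_eq_top_iff]
  rw [baseMatrix, Matrix.range_mulVecLin_one_submatrix, baseIndices, coe_image, coe_univ,
    Set.image_univ, ← Set.range_comp]
  rfl

theorem reach_controlWord_eq_top (hm : 0 < m) (hmN : m ≤ N) :
    reach (modeMatrix m k N) (fun _ => baseMatrix k N) (controlWord m N) = ⊤ := by
  have hne : controlWord m N ≠ [] := fun h => by
    simpa [h] using two_mul_length_controlWord hm hmN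
  rw [reach_eq_top_iff]
  refine eq_univ_of_image_cellOf
    (subset_reachIndices (modeIndexMap m k N) (fun _ => baseIndices k N) hne) ?_
  rw [image_cellOf_reachIndices hmN, foldl_cellStep_controlWord hm hmN]

theorem le_two_mul_length_of_reach_eq_top (hmN : m ≤ N) {π : List (Fin m)}
    (hπ : reach (modeMatrix m k N) (fun _ => baseMatrix k N) π = ⊤) :
    m * (2 * N - m + 1) + 2 ≤ 2 * π.length := by
  have hcells := image_cellOf_reachIndices (k := k) hmN π
  rw [(reach_eq_top_iff π).1 hπ, image_cellOf_univ] at hcells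
  cases π with
  | nil => simp at hcells
  | cons i π =>
    have hweight := cellWeight_foldl_cellStep_le (N := N) π (cellStep m N ∅ i)
    rw [← List.foldl_cons, ← hcells] at hweight
    have h0 : cellWeight m (cellStep m N ∅ i) = 0 := by simp [cellStep, cellWeight]
    have hfull := two_mul_cellWeight_range hmN
    simp only [List.length_cons]
    omega

end Coordinates

/-- Degenerate case with rank constraint: for `r ≥ 1` and `1 ≤ m ≤ n - r` there is
a controllable system (with possibly singular `A_i`) with rank-`r` matrices `B_i`
whose shortest controllable sequences have length exactly `m(2n - m - 2r + 1)/2 + 1`. -/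
theorem stmt19 (n m r : ℕ) (hr : 1 ≤ r) (hm : 1 ≤ m) (hmn : m ≤ n - r) :
    ∃ (A : Fin m → Matrix (Fin n) (Fin n) ℝ) (B : Fin m → Matrix (Fin n) (Fin r) ℝ),
      (∀ i, (B i).rank = r) ∧
      (⋃ π : List (Fin m), (reach A B π : Set (Fin n → ℝ))) = Set.univ ∧
      (∃ π : List (Fin m), reach A B π = ⊤ ∧
        π.length = m * (2 * n - m - 2 * r + 1) / 2 + 1) ∧
      (∀ π : List (Fin m), reach A B π = ⊤ →
        m * (2 * n - m - 2 * r + 1) / 2 + 1 ≤ π.length) := by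
  obtain ⟨k, rfl⟩ : ∃ k, r = k + 1 := ⟨r - 1, by omega⟩
  obtain ⟨N, rfl⟩ : ∃ N, n = k + 1 + N := ⟨n - (k + 1), by omega⟩
  have hmN : m ≤ N := by omega
  have htarget : 2 * (k + 1 + N) - m - 2 * (k + 1) + 1 = 2 * N - m + 1 := by omega
  have hword := reach_controlWord_eq_top (k := k) hm hmN
  refine ⟨modeMatrix m k N, fun _ => baseMatrix k N, fun _ => rank_baseMatrix,
    Set.eq_univ_of_forall fun _ => Set.mem_iUnion.2 ⟨_, hword ▸ Submodule.mem_top⟩,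
    ⟨controlWord m N, hword, ?_⟩, fun π hπ => ?_⟩
  · have hlen := two_mul_length_controlWord hm hmN
    rw [htarget]
    omega
  · have hbound := le_two_mul_length_of_reach_eq_top hmN hπ
    rw [htarget]
    omega
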